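/- Let G be a countably infinite group and F₂ the free group on two generators, both acting in a Borel way on a standard Borel space Z, with a Borel cocycle α : F₂ × Z → G satisfying α(f, z)·z = f·z for all f ∈ F₂, z ∈ Z, and such that f ↦ α(f, z) is injective for each z ∈ Z. Fix an injective group homomorphism ι : F₂ → F₂ whose image has infinite index in F₂. Then the formula f·(g, z) = (g · α(ι(f), g⁻¹·z)⁻¹, z) defines a free Borel action of F₂ on G × Z which commutes with the diagonal G-action g'·(g, z) = (g'g, g'·z). Furthermore, there is a Borel injection c : ℕ × Z → G × Z whose image meets every F₂-orbit of this action exactly once, and which satisfies c(n, z) ∈ G × {z} for all n ∈ ℕ and c(0, z) = (1_G, z) for all z ∈ Z. -/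

import Mathlib

/-!
Since `α(h, z) · z = h · z`, the cocycle identity is exactly what makes
`h · (g, z) = (g α(h, g⁻¹z)⁻¹, z)` an action, and injectivity of `α(·, z)` makes it free. The
action preserves each fiber `G × {z}`, and `w ↦ (α(w, z)⁻¹, z)` intertwines left multiplication
by `ι(F₂)` on `F₂` with it, so distinct cosets of `ι(F₂)` give distinct orbits: every fiber meets
infinitely many orbits. Enumerate `G` starting with `1`, keep in each orbit its element of least
index, and list these representatives in increasing order. Each step only involves the countably
many Borel sets `{z | (g, z) and (g', z) lie in one orbit}`, so the resulting transversal is Borel.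
-/

/-- The free group on two generators. -/
abbrev F2 := FreeGroup (Fin 2)

open Function

section Transversal

variable {Z : Type*} [MeasurableSpace Z]

theorem measurable_nat_count {p : Z → ℕ → Prop} [∀ z, DecidablePred (p z)]
    (hp : ∀ i, MeasurableSet {z | p z i}) (k : ℕ) : Measurable fun z => Nat.count (p z) k := by
  induction k with
  | zero => simp only [Nat.count_zero]; exact measurable_const
  | succ k ih =>
    simp only [Nat.count_succ]
    exact ih.add (Measurable.ite (hp k) measurable_const measurable_const)

theorem measurable_nat_nth {p : Z → ℕ → Prop} (hp : ∀ i, MeasurableSet {z | p z i})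
    (hinf : ∀ z, (Set.ofPred (p z)).Infinite) (n : ℕ) : Measurable fun z => Nat.nth (p z) n := by
  classical
  refine measurable_to_countable' fun k => ?_
  have hpre : (fun z => Nat.nth (p z) n) ⁻¹' {k} = {z | p z k} ∩ {z | Nat.count (p z) k = n} := by
    ext z
    simp only [Set.mem_preimage, Set.mem_singleton_iff, Set.mem_inter_iff, Set.mem_ofPred_eq]
    constructor
    · rintro rfl
      exact ⟨Nat.nth_mem_of_infinite (hinf z) n, Nat.count_nth_of_infinite (hinf z) n⟩
    · rintro ⟨hk, rfl⟩
      exact Nat.nth_count hk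
  rw [hpre]
  exact (hp k).inter (measurable_nat_count hp k (measurableSet_singleton n))

namespace Setoid

def IsLeastRep (s : Setoid ℕ) (j : ℕ) : Prop := ∀ i < j, ¬ s i j

variable {s : Setoid ℕ}

theorem IsLeastRep.eq_of_rel {i j : ℕ} (hi : s.IsLeastRep i) (hj : s.IsLeastRep j) (hij : s i j) :
    i = j := by
  rcases lt_trichotomy i j with h | h | h
  · exact absurd hij (hj i h)
  · exact h
  · exact absurd (s.symm hij) (hi j h)

theorem exists_isLeastRep_rel (j : ℕ) : ∃ i, s.IsLeastRep i ∧ s i j := by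
  classical
  have hex : ∃ i, s i j := ⟨j, s.refl j⟩
  exact ⟨Nat.find hex, fun i hi hij => Nat.find_min hex hi (s.trans hij (Nat.find_spec hex)),
    Nat.find_spec hex⟩

theorem isLeastRep_zero : s.IsLeastRep 0 := fun _ h => absurd h (Nat.not_lt_zero _)

variable (s) in
theorem infinite_setOf_isLeastRep [Infinite (Quotient s)] :
    (Set.ofPred s.IsLeastRep).Infinite := by
  refine Set.infinite_coe_iff.mp
    (Infinite.of_surjective (fun i : Set.ofPred s.IsLeastRep => Quotient.mk s i.1) ?_)
  rintro ⟨j⟩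
  obtain ⟨i, hi, hij⟩ := Setoid.exists_isLeastRep_rel j
  exact ⟨⟨i, hi⟩, Quotient.sound hij⟩

end Setoid

theorem exists_measurable_nat_transversal (s : Z → Setoid ℕ)
    (hs : ∀ i j, MeasurableSet {z | s z i j}) (hinf : ∀ z, Infinite (Quotient (s z))) :
    ∃ c : ℕ → Z → ℕ, (∀ n, Measurable (c n)) ∧ (∀ z, c 0 z = 0) ∧ ∀ z j, ∃! n, s z (c n z) j := by
  have hleast : ∀ i, MeasurableSet {z | (s z).IsLeastRep i} := fun i => by
    simp only [Setoid.IsLeastRep, Set.ofPred_forall]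
    exact MeasurableSet.iInter fun k => MeasurableSet.iInter fun _ => (hs k i).compl
  have hinfRep : ∀ z, (Set.ofPred (s z).IsLeastRep).Infinite := fun z =>
    (s z).infinite_setOf_isLeastRep
  refine ⟨fun n z => Nat.nth (s z).IsLeastRep n, measurable_nat_nth hleast hinfRep,
    fun z => Nat.nth_zero_of_zero Setoid.isLeastRep_zero, fun z j => ?_⟩
  obtain ⟨i, hi, hij⟩ := Setoid.exists_isLeastRep_rel (s := s z) j
  obtain ⟨n, rfl⟩ : i ∈ Set.range (Nat.nth (s z).IsLeastRep) := by
    rwa [Nat.range_nth_of_infinite (hinfRep z)]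
  refine ⟨n, hij, fun m hm => Nat.nth_injective (hinfRep z) ?_⟩
  exact (Nat.nth_mem_of_infinite (hinfRep z) m).eq_of_rel hi ((s z).trans hm ((s z).symm hij))

theorem exists_measurable_transversal {G : Type*} [Countable G] [Infinite G] [MeasurableSpace G]
    [DiscreteMeasurableSpace G] (g₀ : G) (s : Z → Setoid G)
    (hs : ∀ g g', MeasurableSet {z | s z g g'}) (hinf : ∀ z, Infinite (Quotient (s z))) :
    ∃ c : ℕ → Z → G, (∀ n, Measurable (c n)) ∧ (∀ z, c 0 z = g₀) ∧
      ∀ z g, ∃! n, s z (c n z) g := by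
  classical
  obtain ⟨_⟩ := nonempty_denumerable G
  let e : ℕ ≃ G := (Denumerable.eqv G).symm.trans (Equiv.swap ((Denumerable.eqv G).symm 0) g₀)
  have hcomap : ∀ z, Infinite (Quotient ((s z).comap e)) := fun z =>
    (Quotient.congr e fun i j => Setoid.comap_rel e (s z) i j).infinite_iff.mpr (hinf z)
  obtain ⟨c, hmeas, hzero, htrans⟩ := exists_measurable_nat_transversal (fun z => (s z).comap e)
    (fun i j => hs (e i) (e j)) hcomap
  refine ⟨fun n z => e (c n z), fun n => Measurable.of_discrete.comp (hmeas n),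
    fun z => by simp [hzero, e], fun z g => ?_⟩
  simpa only [Setoid.comap_rel, Equiv.apply_symm_apply] using htrans z (e.symm g)

end Transversal

section Cocycle

variable {G H K Z : Type*} [Group G] [MulAction G Z]

/-- A cocycle for the action `h • z := β h z • z` of `H` on `Z` that `β` itself induces. -/
structure IsCocycle [Group H] (β : H → Z → G) : Prop where
  map_one : ∀ z, β 1 z = 1
  map_mul : ∀ h₁ h₂ z, β (h₂ * h₁) z = β h₂ (β h₁ z • z) * β h₁ z

def twistedSMul (β : H → Z → G) (h : H) (p : G × Z) : G × Z :=
  (p.1 * (β h (p.1⁻¹ • p.2))⁻¹, p.2)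

variable {β : H → Z → G}

@[simp]
theorem twistedSMul_snd (h : H) (p : G × Z) : (twistedSMul β h p).2 = p.2 := rfl

theorem twistedSMul_smul (g : G) (h : H) (p : G × Z) :
    twistedSMul β h (g • p) = g • twistedSMul β h p := by
  simp only [twistedSMul, Prod.smul_fst, Prod.smul_snd, Prod.smul_mk, smul_eq_mul, mul_inv_rev,
    mul_smul, inv_smul_smul, mul_assoc]

theorem measurable_twistedSMul [Countable G] [MeasurableSpace G] [DiscreteMeasurableSpace G]
    [MeasurableSpace Z] [MeasurableConstSMul G Z] {h : H} (hβ : Measurable (β h)) :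
    Measurable (twistedSMul β h) := by
  refine measurable_from_prod_countable_right fun g => ?_
  exact ((Measurable.of_discrete (f := fun x : G => g * x⁻¹)).comp
    (hβ.comp (measurable_const_smul g⁻¹))).prodMk measurable_id

variable [Group H] [Group K]

namespace IsCocycle

theorem twistedSMul_one (hβ : IsCocycle β) (p : G × Z) : twistedSMul β 1 p = p := by
  simp [twistedSMul, hβ.map_one]

theorem twistedSMul_mul (hβ : IsCocycle β) (h h' : H) (p : G × Z) :
    twistedSMul β (h * h') p = twistedSMul β h (twistedSMul β h' p) := by
  simp only [twistedSMul, mul_inv_rev, inv_inv, mul_smul, hβ.map_mul h' h, mul_assoc]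

theorem twistedSMul_ne_self (hβ : IsCocycle β) (hinj : ∀ z, Injective fun h => β h z) {h : H}
    (hh : h ≠ 1) (p : G × Z) : twistedSMul β h p ≠ p := by
  intro hfix
  have hβh : β h (p.1⁻¹ • p.2) = β 1 (p.1⁻¹ • p.2) := by
    simpa [twistedSMul, hβ.map_one] using congrArg Prod.fst hfix
  exact hh (hinj _ hβh)

theorem twistedSMul_inv_apply (hβ : IsCocycle β) (h w : H) (z : Z) :
    twistedSMul β h ((β w z)⁻¹, z) = ((β (h * w) z)⁻¹, z) := by
  simp [twistedSMul, hβ.map_mul w h]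

def fiberOrbitRel (hβ : IsCocycle β) (φ : K →* H) (z : Z) : Setoid G where
  r g g' := ∃ k, twistedSMul β (φ k) (g, z) = (g', z)
  iseqv.refl _ := ⟨1, by rw [φ.map_one, hβ.twistedSMul_one]⟩
  iseqv.symm := fun ⟨k, hk⟩ => ⟨k⁻¹, by
    rw [← hk, ← hβ.twistedSMul_mul, φ.map_inv, inv_mul_cancel, hβ.twistedSMul_one]⟩
  iseqv.trans := fun ⟨k, hk⟩ ⟨k', hk'⟩ => ⟨k' * k, by rw [φ.map_mul, hβ.twistedSMul_mul, hk, hk']⟩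

@[simp]
theorem fiberOrbitRel_apply (hβ : IsCocycle β) (φ : K →* H) (z : Z) (g g' : G) :
    hβ.fiberOrbitRel φ z g g' ↔ ∃ k, twistedSMul β (φ k) (g, z) = (g', z) := Iff.rfl

theorem measurableSet_fiberOrbitRel [Countable K] [Countable G] [MeasurableSpace G]
    [DiscreteMeasurableSpace G] [MeasurableSpace Z] [MeasurableConstSMul G Z] (hβ : IsCocycle β)
    (hβmeas : ∀ h, Measurable (β h)) (φ : K →* H) (g g' : G) :
    MeasurableSet {z | hβ.fiberOrbitRel φ z g g'} := by
  have hset : {z | hβ.fiberOrbitRel φ z g g'} =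
      ⋃ k, (fun z => (twistedSMul β (φ k) (g, z)).1) ⁻¹' {g'} := by
    ext z
    simp [Prod.ext_iff]
  rw [hset]
  exact .iUnion fun k => (measurable_fst.comp ((measurable_twistedSMul (hβmeas _)).comp
    measurable_prodMk_left)) (measurableSet_singleton g')

theorem fiberOrbitRel_inv_iff (hβ : IsCocycle β) (φ : K →* H) {z : Z}
    (hinj : Injective fun h => β h z) (w w' : H) :
    hβ.fiberOrbitRel φ z (β w z)⁻¹ (β w' z)⁻¹ ↔ w' * w⁻¹ ∈ φ.range := by
  simp only [fiberOrbitRel_apply, hβ.twistedSMul_inv_apply, Prod.mk.injEq, inv_inj, and_true,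
    hinj.eq_iff, MonoidHom.mem_range, eq_mul_inv_iff_mul_eq]

theorem infinite_quotient_fiberOrbitRel (hβ : IsCocycle β) (φ : K →* H)
    [Infinite (H ⧸ φ.range)] {z : Z} (hinj : Injective fun h => β h z) :
    Infinite (Quotient (hβ.fiberOrbitRel φ z)) := by
  have : Infinite (Quotient (QuotientGroup.rightRel φ.range)) :=
    (QuotientGroup.quotientRightRelEquivQuotientLeftRel φ.range).infinite_iff.mpr inferInstance
  refine Infinite.of_injective (Quotient.map' (fun w => (β w z)⁻¹) fun w w' hw =>
    (hβ.fiberOrbitRel_inv_iff φ hinj w w').mpr (QuotientGroup.rightRel_apply.mp hw)) ?_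
  rintro ⟨w⟩ ⟨w'⟩ hww'
  exact Quotient.sound (QuotientGroup.rightRel_apply.mpr
    ((hβ.fiberOrbitRel_inv_iff φ hinj w w').mp (Quotient.exact hww')))

theorem exists_measurable_twistedSMul_transversal [Countable K] [Countable G] [Infinite G]
    [MeasurableSpace G] [DiscreteMeasurableSpace G] [MeasurableSpace Z] [MeasurableConstSMul G Z]
    (hβ : IsCocycle β) (hβmeas : ∀ h, Measurable (β h)) (hinj : ∀ z, Injective fun h => β h z)
    (φ : K →* H) [Infinite (H ⧸ φ.range)] :
    ∃ c : ℕ × Z → G × Z, Measurable c ∧ Injective c ∧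
      (∀ p : G × Z, ∃! q : G × Z, q ∈ Set.range c ∧ ∃ k, twistedSMul β (φ k) q = p) ∧
      (∀ n z, (c (n, z)).2 = z) ∧ (∀ z, c (0, z) = (1, z)) := by
  obtain ⟨c, hmeas, hzero, htrans⟩ := exists_measurable_transversal 1 (hβ.fiberOrbitRel φ)
    (hβ.measurableSet_fiberOrbitRel hβmeas φ) fun z => hβ.infinite_quotient_fiberOrbitRel φ (hinj z)
  have hunique {z g n m} (hn : hβ.fiberOrbitRel φ z (c n z) g)
      (hm : hβ.fiberOrbitRel φ z (c m z) g) : n = m :=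
    (htrans z g).unique hn hm
  refine ⟨fun q => (c q.1 q.2, q.2), measurable_from_prod_countable_right fun n =>
    (hmeas n).prodMk measurable_id, ?_, ?_, fun _ _ => rfl, fun z => Prod.ext (hzero z) rfl⟩
  · rintro ⟨n, z⟩ ⟨m, z'⟩ h
    obtain ⟨hnm, rfl⟩ := Prod.mk.inj h
    have hrel : hβ.fiberOrbitRel φ z (c m z) (c n z) := hnm ▸ (hβ.fiberOrbitRel φ z).refl _
    rw [hunique ((hβ.fiberOrbitRel φ z).refl _) hrel]
  · rintro ⟨g, z⟩
    obtain ⟨n, hn, -⟩ := htrans z g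
    refine ⟨(c n z, z), ⟨⟨(n, z), rfl⟩, hn⟩, ?_⟩
    rintro _ ⟨⟨⟨m, z'⟩, rfl⟩, k, hk⟩
    obtain rfl : z' = z := congrArg Prod.snd hk
    dsimp only at hk ⊢
    rw [hunique ⟨k, hk⟩ hn]

end IsCocycle

end Cocycle

theorem stmt11_general (G : Type*) [Group G] [Countable G] [Infinite G]
    [MeasurableSpace G] [DiscreteMeasurableSpace G]
    (Z : Type) [MeasurableSpace Z]
    -- a Borel action of G on Z
    (a : G → Z → Z) (ha1 : a 1 = id) (hamul : ∀ g g' : G, a (g * g') = a g ∘ a g')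
    (hameas : ∀ g : G, Measurable (a g))
    -- a Borel action of F₂ on Z
    (b : F2 → Z → Z) (hb1 : b 1 = id)
    -- a Borel cocycle α : F₂ × Z → G relating the actions
    (α : F2 → Z → G) (hαmeas : ∀ f : F2, Measurable (α f))
    (hαcoc : ∀ (f₁ f₂ : F2) (z : Z), α (f₂ * f₁) z = α f₂ (b f₁ z) * α f₁ z)
    (hα : ∀ (f : F2) (z : Z), a (α f z) z = b f z)
    (hαinj : ∀ z : Z, Function.Injective fun f : F2 => α f z)
    -- an injective endomorphism of F₂ whose image has infinite index
    (ι : F2 →* F2) (hι : Function.Injective ι) (hιidx : Infinite (F2 ⧸ ι.range))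
    -- the operation f · (g, z) = (g · α(ι(f), g⁻¹ · z)⁻¹, z)
    (d : F2 → G × Z → G × Z)
    (hd : ∀ (f : F2) (p : G × Z), d f p = (p.1 * (α (ι f) (a p.1⁻¹ p.2))⁻¹, p.2)) :
    -- d is a free Borel action of F₂ on G × Z
    (∀ p : G × Z, d 1 p = p) ∧
    (∀ (f f' : F2) (p : G × Z), d (f * f') p = d f (d f' p)) ∧
    (∀ f : F2, Measurable (d f)) ∧
    (∀ f : F2, f ≠ 1 → ∀ p : G × Z, d f p ≠ p) ∧
    -- it commutes with the diagonal G-action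
    (∀ (g' : G) (f : F2) (p : G × Z),
      d f (g' * p.1, a g' p.2) = (g' * (d f p).1, a g' (d f p).2)) ∧
    -- a Borel injection whose image is a transversal of the F₂-orbits
    (∃ c : ℕ × Z → G × Z,
      Measurable c ∧ Function.Injective c ∧
      (∀ p : G × Z, ∃! q : G × Z, q ∈ Set.range c ∧ ∃ f : F2, d f q = p) ∧
      (∀ (n : ℕ) (z : Z), (c (n, z)).2 = z) ∧
      (∀ z : Z, c (0, z) = (1, z))) := by
  let : MulAction G Z :=
    { smul := a, one_smul := congrFun ha1, mul_smul := fun g g' => congrFun (hamul g g') }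
  have : MeasurableConstSMul G Z := ⟨hameas⟩
  have hcoc : IsCocycle α :=
    { map_one := fun z => by simpa [hb1] using hαcoc 1 1 z
      map_mul := fun f₁ f₂ z => by rw [hαcoc, ← hα]; rfl }
  obtain rfl : d = fun f => twistedSMul α (ι f) := funext₂ hd
  refine ⟨fun p => by simpa using hcoc.twistedSMul_one p,
    fun f f' p => by simpa using hcoc.twistedSMul_mul (ι f) (ι f') p,
    fun f => measurable_twistedSMul (hαmeas _),
    fun f hf => hcoc.twistedSMul_ne_self hαinj ((map_ne_one_iff ι hι).mpr hf),
    fun g f p => twistedSMul_smul g (ι f) p,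
    hcoc.exists_measurable_twistedSMul_transversal hαmeas hαinj ι⟩

theorem stmt11 (G : Type*) [Group G] [Countable G] [Infinite G]
    [MeasurableSpace G] [DiscreteMeasurableSpace G]
    (Z : Type) [MeasurableSpace Z] [StandardBorelSpace Z]
    -- a Borel action of G on Z
    (a : G → Z → Z) (ha1 : a 1 = id) (hamul : ∀ g g' : G, a (g * g') = a g ∘ a g')
    (hameas : ∀ g : G, Measurable (a g))
    -- a Borel action of F₂ on Z
    (b : F2 → Z → Z) (hb1 : b 1 = id) (hbmul : ∀ f f' : F2, b (f * f') = b f ∘ b f')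
    (hbmeas : ∀ f : F2, Measurable (b f))
    -- a Borel cocycle α : F₂ × Z → G relating the actions
    (α : F2 → Z → G) (hαmeas : ∀ f : F2, Measurable (α f))
    (hαcoc : ∀ (f₁ f₂ : F2) (z : Z), α (f₂ * f₁) z = α f₂ (b f₁ z) * α f₁ z)
    (hα : ∀ (f : F2) (z : Z), a (α f z) z = b f z)
    (hαinj : ∀ z : Z, Function.Injective fun f : F2 => α f z)
    -- an injective endomorphism of F₂ whose image has infinite index
    (ι : F2 →* F2) (hι : Function.Injective ι) (hιidx : Infinite (F2 ⧸ ι.range))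
    -- the operation f · (g, z) = (g · α(ι(f), g⁻¹ · z)⁻¹, z)
    (d : F2 → G × Z → G × Z)
    (hd : ∀ (f : F2) (p : G × Z), d f p = (p.1 * (α (ι f) (a p.1⁻¹ p.2))⁻¹, p.2)) :
    -- d is a free Borel action of F₂ on G × Z
    (∀ p : G × Z, d 1 p = p) ∧
    (∀ (f f' : F2) (p : G × Z), d (f * f') p = d f (d f' p)) ∧
    (∀ f : F2, Measurable (d f)) ∧
    (∀ f : F2, f ≠ 1 → ∀ p : G × Z, d f p ≠ p) ∧
    -- it commutes with the diagonal G-action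
    (∀ (g' : G) (f : F2) (p : G × Z),
      d f (g' * p.1, a g' p.2) = (g' * (d f p).1, a g' (d f p).2)) ∧
    -- a Borel injection whose image is a transversal of the F₂-orbits
    (∃ c : ℕ × Z → G × Z,
      Measurable c ∧ Function.Injective c ∧
      (∀ p : G × Z, ∃! q : G × Z, q ∈ Set.range c ∧ ∃ f : F2, d f q = p) ∧
      (∀ (n : ℕ) (z : Z), (c (n, z)).2 = z) ∧
      (∀ z : Z, c (0, z) = (1, z))) :=
  stmt11_general G Z a ha1 hamul hameas b hb1 α hαmeas hαcoc hα hαinj ι hι hιidx d hd
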